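/- arXiv:0704.3357 — 5 statements merged into one kernel-verified Lean document; each statement's English description precedes it below -/
import Mathlib

section
/- For all natural numbers m, n and every matrix M : Matrix (Fin m) (Fin n) ℂ, the squared generalized concurrence vanishes, i.e. (tr(M * Mᴴ))² = tr((M * Mᴴ)²), if and only if there exist vectors x : Fin m → ℂ and y : Fin n → ℂ with M = vecMulVec x y (i.e., the corresponding bipartite vector ψ is a product vector). -/
/-!
Summing over all ordered pairs of rows `a, a'` and of columns `b, b'`,
`2 (tr(M Mᴴ)² - tr((M Mᴴ)²)) = ∑ |M a b * M a' b' - M a' b * M a b'|²`, a Lagrange-type identity.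
Hence the concurrence vanishes iff every `2 × 2` minor of `M` vanishes, and a matrix all of whose
`2 × 2` minors vanish is a column times a row: any of its nonzero entries `M a₀ b₀` gives
`M a b = M a b₀ * (M a₀ b / M a₀ b₀)`.
-/

open Matrix
open scoped ComplexOrder

namespace Matrix

variable {m n R : Type*}

def twoByTwoMinors [CommRing R] (M : Matrix m n R) : Matrix (m × m) (n × n) R :=
  fun i j => M i.1 j.1 * M i.2 j.2 - M i.2 j.1 * M i.1 j.2

section Trace

variable [Fintype m] [Fintype n] [CommRing R] [StarRing R] (M : Matrix m n R)

lemma trace_mul_conjTranspose_sq :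
    (M * Mᴴ).trace ^ 2 =
      ∑ a, ∑ a', ∑ b, ∑ b', M a b * star (M a b) * (M a' b' * star (M a' b')) := by
  simp only [trace, diag, mul_apply, conjTranspose_apply, sq, Finset.sum_mul_sum]

lemma trace_mul_conjTranspose_pow_two [DecidableEq m] :
    ((M * Mᴴ) ^ 2).trace =
      ∑ a, ∑ a', ∑ b, ∑ b', M a b * star (M a' b) * (M a' b' * star (M a b')) := by
  simp only [trace, diag, mul_apply, conjTranspose_apply, sq, Finset.sum_mul_sum]

lemma trace_twoByTwoMinors_mul_conjTranspose [DecidableEq m] :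
    (twoByTwoMinors M * (twoByTwoMinors M)ᴴ).trace =
      2 * ((M * Mᴴ).trace ^ 2 - ((M * Mᴴ) ^ 2).trace) := by
  set P : m → m → n → n → R := fun a a' b b' => M a b * star (M a b) * (M a' b' * star (M a' b'))
  set Q : m → m → n → n → R := fun a a' b b' => M a b * star (M a' b) * (M a' b' * star (M a b'))
  have hexpand : (twoByTwoMinors M * (twoByTwoMinors M)ᴴ).trace =
      ∑ a, ∑ a', ∑ b, ∑ b', (P a a' b b' + P a' a b b' - Q a a' b b' - Q a' a b b') := by
    simp only [trace, diag, mul_apply, conjTranspose_apply, Fintype.sum_prod_type,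
      twoByTwoMinors, P, Q, star_sub, star_mul]
    refine Fintype.sum_congr _ _ fun a => Fintype.sum_congr _ _ fun a' =>
      Fintype.sum_congr _ _ fun b => Fintype.sum_congr _ _ fun b' => ?_
    ring
  -- swapping the two rows exchanges the two copies of `P`, and those of `Q`
  have hswap (f : m → m → n → n → R) :
      ∑ a, ∑ a', ∑ b, ∑ b', f a' a b b' = ∑ a, ∑ a', ∑ b, ∑ b', f a a' b b' :=
    Finset.sum_comm
  simp only [hexpand, Finset.sum_add_distrib, Finset.sum_sub_distrib]
  rw [hswap P, hswap Q, trace_mul_conjTranspose_sq, trace_mul_conjTranspose_pow_two]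
  ring

end Trace

lemma exists_eq_vecMulVec_iff_twoByTwoMinors_eq_zero {K : Type*} [Field K] (M : Matrix m n K) :
    (∃ x y, M = vecMulVec x y) ↔ twoByTwoMinors M = 0 := by
  constructor
  · rintro ⟨x, y, rfl⟩
    ext i j
    simp only [twoByTwoMinors, vecMulVec_apply, zero_apply]
    ring
  · intro h
    by_cases hM : M = 0
    · exact ⟨0, 0, by simp [hM]⟩
    obtain ⟨a₀, b₀, h₀⟩ : ∃ a b, M a b ≠ 0 := by
      by_contra! hc
      exact hM (ext hc)
    refine ⟨fun a => M a b₀, fun b => M a₀ b / M a₀ b₀, ext fun a b => ?_⟩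
    have hminor : M a b * M a₀ b₀ - M a₀ b * M a b₀ = 0 := congr_fun₂ h (a, a₀) (b, b₀)
    rw [vecMulVec_apply]
    field_simp
    linear_combination hminor

end Matrix

theorem concurrence_sq_eq_zero_iff_product (m n : ℕ) (M : Matrix (Fin m) (Fin n) ℂ) :
    ((M * Mᴴ).trace) ^ 2 = ((M * Mᴴ) ^ 2).trace ↔
      ∃ (x : Fin m → ℂ) (y : Fin n → ℂ), M = vecMulVec x y := by
  rw [exists_eq_vecMulVec_iff_twoByTwoMinors_eq_zero, ← trace_mul_conjTranspose_self_eq_zero_iff,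
    trace_twoByTwoMinors_mul_conjTranspose, mul_eq_zero, sub_eq_zero]
  exact (or_iff_right two_ne_zero).symm
end

section
/- Let d, r, N be natural numbers with r ≤ N, let e : Fin r → (Fin d → ℂ) be a family of pairwise orthogonal nonzero vectors (a subnormalized eigenensemble), and let ψ : Fin N → (Fin d → ℂ) satisfy Σ_{i} vecMulVec (ψ i) (star (ψ i)) = Σ_{α} vecMulVec (e α) (star (e α)). Then there exists a matrix z : Matrix (Fin N) (Fin r) ℂ with zᴴ * z = 1 (i.e., Σ_i conj(z i α) * z i β = δ_{αβ}) such that ψ i = Σ_α z i α • e α for every i. -/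
/-!
Put the vectors `ψ i` and `e α` as the rows of matrices `A` and `B`; the hypothesis says
`Aᴴ A = Bᴴ B`, and orthogonality makes the Gram matrix `G = B Bᴴ` diagonal and invertible.
Take `z = A Bᴴ G⁻¹`. Then `zᴴ z = G⁻¹ B (Aᴴ A) Bᴴ G⁻¹ = G⁻¹ G G G⁻¹ = 1`. The residual
`X = A - z B` satisfies `X Bᴴ = 0`, hence `(X Aᴴ)(X Aᴴ)ᴴ = X (Bᴴ B) Xᴴ = 0`, so `X Aᴴ = 0` and
therefore `X Xᴴ = X Aᴴ - X Bᴴ zᴴ = 0`, i.e. `A = z B`.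
-/

open Matrix

namespace Matrix

section Gram

variable {R m n : Type*} [CommSemiring R] [StarRing R]

theorem sum_vecMulVec_star_eq_transpose_conjTranspose_mul_self [Fintype m] (v : m → n → R) :
    ∑ i, vecMulVec (v i) (star (v i)) = ((of v)ᴴ * of v)ᵀ := by
  ext j l
  simp only [sum_apply, vecMulVec_apply, transpose_apply, mul_apply, conjTranspose_apply,
    of_apply, Pi.star_apply, mul_comm]

theorem of_mul_conjTranspose_of_eq_diagonal [Fintype n] [DecidableEq m] {v : m → n → R}
    (hv : Pairwise fun α β => star (v α) ⬝ᵥ v β = 0) :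
    of v * (of v)ᴴ = diagonal fun α => v α ⬝ᵥ star (v α) := by
  ext α β
  rcases eq_or_ne α β with rfl | hαβ
  · simp only [mul_apply, conjTranspose_apply, of_apply, diagonal_apply_eq, dotProduct,
      Pi.star_apply]
  · rw [diagonal_apply_ne _ hαβ, ← hv hαβ.symm, dotProduct_comm]
    simp only [mul_apply, conjTranspose_apply, of_apply, dotProduct, Pi.star_apply]

end Gram

section Projection

variable {R m n k : Type*} [Field R] [StarRing R] [Fintype m] [Fintype n] [Fintype k]
  [DecidableEq k]

/-- The coefficients of the orthogonal projections of the rows of `A` onto the row space of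
`B`, when the Gram matrix `B * Bᴴ` is invertible. -/
noncomputable def projCoeffs (A : Matrix m n R) (B : Matrix k n R) : Matrix m k R :=
  A * Bᴴ * (B * Bᴴ)⁻¹

variable {A : Matrix m n R} {B : Matrix k n R}

theorem conjTranspose_projCoeffs_mul_self (hAB : Aᴴ * A = Bᴴ * B) (hB : IsUnit (B * Bᴴ).det) :
    (projCoeffs A B)ᴴ * projCoeffs A B = 1 := by
  have hG : (B * Bᴴ)⁻¹ᴴ = (B * Bᴴ)⁻¹ := by
    rw [conjTranspose_nonsing_inv, (isHermitian_mul_conjTranspose_self B).eq]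
  calc (projCoeffs A B)ᴴ * projCoeffs A B
      = (B * Bᴴ)⁻¹ * B * (Aᴴ * A) * Bᴴ * (B * Bᴴ)⁻¹ := by
        simp only [projCoeffs, conjTranspose_mul, conjTranspose_conjTranspose, hG,
          Matrix.mul_assoc]
    _ = ((B * Bᴴ)⁻¹ * (B * Bᴴ)) * ((B * Bᴴ) * (B * Bᴴ)⁻¹) := by
        simp only [hAB, Matrix.mul_assoc]
    _ = 1 := by rw [nonsing_inv_mul _ hB, mul_nonsing_inv _ hB, Matrix.one_mul]

theorem projCoeffs_mul [PartialOrder R] [StarOrderedRing R] (hAB : Aᴴ * A = Bᴴ * B)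
    (hB : IsUnit (B * Bᴴ).det) : projCoeffs A B * B = A := by
  set X := A - projCoeffs A B * B with hX
  have hXB : X * Bᴴ = 0 := by
    simp only [X, projCoeffs, Matrix.sub_mul, Matrix.mul_assoc, nonsing_inv_mul _ hB,
      Matrix.mul_one, sub_self]
  have hXA : X * Aᴴ = 0 := by
    rw [← mul_conjTranspose_mul_self_eq_zero, hAB, ← Matrix.mul_assoc, hXB, Matrix.zero_mul]
  have hXX : X * Xᴴ = 0 := by
    conv_lhs => rw [hX, conjTranspose_sub, conjTranspose_mul, Matrix.mul_sub, ← Matrix.mul_assoc]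
    rw [hXA, hXB, Matrix.zero_mul, sub_zero]
  rw [← sub_eq_zero, ← neg_sub, neg_eq_zero]
  exact self_mul_conjTranspose_eq_zero.mp hXX

end Projection

end Matrix

open ComplexOrder

theorem schroedinger_HJW_general (d r N : ℕ) (e : Fin r → (Fin d → ℂ))
    (he_ne : ∀ α, e α ≠ 0)
    (he_orth : ∀ α β, α ≠ β → ∑ j : Fin d, (starRingEnd ℂ) (e α j) * e β j = 0)
    (ψ : Fin N → (Fin d → ℂ))
    (hψ : (∑ i : Fin N, vecMulVec (ψ i) (star (ψ i))) =
      ∑ α : Fin r, vecMulVec (e α) (star (e α))) :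
    ∃ z : Matrix (Fin N) (Fin r) ℂ, zᴴ * z = 1 ∧
      ∀ i, ψ i = ∑ α : Fin r, z i α • e α := by
  have hGram : IsUnit (of e * (of e)ᴴ).det := by
    rw [of_mul_conjTranspose_of_eq_diagonal fun α β h => he_orth α β h, det_diagonal]
    exact (Finset.prod_ne_zero_iff.mpr fun α _ =>
      dotProduct_self_star_eq_zero.not.mpr (he_ne α)).isUnit
  have hψe : (of ψ)ᴴ * of ψ = (of e)ᴴ * of e := by
    simpa only [sum_vecMulVec_star_eq_transpose_conjTranspose_mul_self, transpose_inj] using hψ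
  exact ⟨projCoeffs (of ψ) (of e), conjTranspose_projCoeffs_mul_self hψe hGram, fun i =>
    (congrFun (projCoeffs_mul hψe hGram) i).symm.trans (vecMul_eq_sum _ _)⟩

theorem schroedinger_HJW (d r N : ℕ) (hrN : r ≤ N) (e : Fin r → (Fin d → ℂ))
    (he_ne : ∀ α, e α ≠ 0)
    (he_orth : ∀ α β, α ≠ β → ∑ j : Fin d, (starRingEnd ℂ) (e α j) * e β j = 0)
    (ψ : Fin N → (Fin d → ℂ))
    (hψ : (∑ i : Fin N, vecMulVec (ψ i) (star (ψ i))) =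
      ∑ α : Fin r, vecMulVec (e α) (star (e α))) :
    ∃ z : Matrix (Fin N) (Fin r) ℂ, zᴴ * z = 1 ∧
      ∀ i, ψ i = ∑ α : Fin r, z i α • e α :=
  schroedinger_HJW_general d r N e he_ne he_orth ψ hψ
end

section
/- Let m, n be positive natural numbers and let ρ : Matrix (Fin m × Fin n) (Fin m × Fin n) ℂ be separable, i.e., there exist a finite index type I, weights p : I → ℝ with p i ≥ 0 and Σ_i p i = 1, and unit vectors x : I → (Fin m → ℂ), y : I → (Fin n → ℂ) with ρ = Σ_i (p i : ℂ) • (vecMulVec (x i) (star (x i)) ⊗ₖ vecMulVec (y i) (star (y i))). Then ρ admits such a separable decomposition with at most m² n² terms: there exist N ≤ m² * n², weights q : Fin N → ℝ with q j ≥ 0 and Σ_j q j = 1, and unit vectors x' : Fin N → (Fin m → ℂ), y' : Fin N → (Fin n → ℂ), with ρ = Σ_j (q j : ℂ) • (vecMulVec (x' j) (star (x' j)) ⊗ₖ vecMulVec (y' j) (star (y' j))). -/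
/-!
Pure product states lie in the real space of Hermitian matrices, of dimension `(mn)²`, and on
the hyperplane `re (trace σ) = 1`. Carathéodory's theorem writes `ρ` as a convex combination of
affinely independent pure product states; affinely independent points on a hyperplane that misses
the origin are linearly independent, so there are at most `(mn)²` of them.
-/

open Matrix Kronecker Module Submodule

theorem AffineIndependent.linearIndependent_of_forall_eq_one {k E ι : Type*} [Ring k]
    [AddCommGroup E] [Module k E] {z : ι → E} (hz : AffineIndependent k z)
    (φ : E →ₗ[k] k) (hφ : ∀ i, φ (z i) = 1) : LinearIndependent k z := by
  rw [linearIndependent_iff']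
  intro s g hg i hi
  have hsum : ∑ i ∈ s, g i = 0 := by
    simpa [hφ] using congrArg φ hg
  exact hz s g hsum (by rw [s.weightedVSub_eq_linear_combination hsum, hg]) i hi

theorem exists_fin_convexCombination_le_finrank_span {E : Type*} [AddCommGroup E]
    [Module ℝ E] [FiniteDimensional ℝ E] {S : Set E} (φ : E →ₗ[ℝ] ℝ)
    (hφ : ∀ s ∈ S, φ s = 1) {x : E} (hx : x ∈ convexHull ℝ S) :
    ∃ N ≤ finrank ℝ (span ℝ S), ∃ (w : Fin N → ℝ) (z : Fin N → E),
      (∀ j, 0 ≤ w j) ∧ ∑ j, w j = 1 ∧ (∀ j, z j ∈ S) ∧ ∑ j, w j • z j = x := by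
  obtain ⟨ι, _, z, w, hzS, hz, hw_pos, hw_one, rfl⟩ := eq_pos_convex_span_of_mem_convexHull hx
  have hcard : Fintype.card ι ≤ finrank ℝ (span ℝ S) := by
    rw [← finrank_span_eq_card (hz.linearIndependent_of_forall_eq_one φ
      fun i ↦ hφ _ (hzS ⟨i, rfl⟩))]
    exact finrank_mono (span_mono hzS)
  let e := (Fintype.equivFin ι).symm
  refine ⟨_, hcard, w ∘ e, z ∘ e, fun j ↦ (hw_pos _).le, ?_, fun j ↦ hzS ⟨_, rfl⟩, ?_⟩
  · rw [← hw_one]; exact e.sum_comp w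
  · exact e.sum_comp fun i ↦ w i • z i

theorem two_mul_finrank_selfAdjoint (A : Type*) [AddCommGroup A] [Module ℂ A]
    [StarAddMonoid A] [StarModule ℂ A] [FiniteDimensional ℝ A] :
    2 * finrank ℝ (selfAdjoint.submodule ℝ A) = finrank ℝ A := by
  have h := imaginaryPart (A := A).finrank_range_add_finrank_ker
  rw [LinearMap.range_eq_top.mpr imaginaryPart_surjective, finrank_top, ker_imaginaryPart] at h
  rw [← h, two_mul]
  rfl

theorem finrank_selfAdjoint_matrix (n : Type*) [Fintype n] :
    finrank ℝ (selfAdjoint.submodule ℝ (Matrix n n ℂ)) = Fintype.card n ^ 2 := by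
  have h := two_mul_finrank_selfAdjoint (Matrix n n ℂ)
  rw [finrank_matrix, Complex.finrank_real_complex] at h
  linarith

section PureProductStates

variable (l k : Type*) [Fintype l] [Fintype k]

def pureProductStates : Set (Matrix (l × k) (l × k) ℂ) :=
  {σ | ∃ (u : l → ℂ) (v : k → ℂ), (∑ a, ‖u a‖ ^ 2 = 1) ∧ (∑ b, ‖v b‖ ^ 2 = 1) ∧
    σ = vecMulVec u (star u) ⊗ₖ vecMulVec v (star v)}

variable {l k}

theorem trace_vecMulVec_self_star {n : Type*} [Fintype n] (u : n → ℂ) :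
    (vecMulVec u (star u)).trace = ((∑ a, ‖u a‖ ^ 2 : ℝ) : ℂ) := by
  simp [trace_vecMulVec, dotProduct, Complex.mul_conj, Complex.normSq_eq_norm_sq]

theorem trace_of_mem_pureProductStates {σ : Matrix (l × k) (l × k) ℂ}
    (hσ : σ ∈ pureProductStates l k) : σ.trace = 1 := by
  obtain ⟨u, v, hu, hv, rfl⟩ := hσ
  rw [trace_kronecker, trace_vecMulVec_self_star, trace_vecMulVec_self_star, hu, hv]
  simp

theorem span_pureProductStates_le_selfAdjoint :
    span ℝ (pureProductStates l k) ≤ selfAdjoint.submodule ℝ _ := by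
  refine span_le.mpr ?_
  rintro _ ⟨u, v, -, -, rfl⟩
  change star _ = _
  rw [star_eq_conjTranspose, conjTranspose_kronecker, conjTranspose_vecMulVec,
    conjTranspose_vecMulVec, star_star, star_star]

theorem finrank_span_pureProductStates_le :
    finrank ℝ (span ℝ (pureProductStates l k)) ≤ (Fintype.card l * Fintype.card k) ^ 2 := by
  rw [← Fintype.card_prod, ← finrank_selfAdjoint_matrix]
  exact finrank_mono span_pureProductStates_le_selfAdjoint

theorem mem_convexHull_pureProductStates {I : Type*} [Fintype I] {p : I → ℝ}
    {x : I → l → ℂ} {y : I → k → ℂ} (hp : ∀ i, 0 ≤ p i) (hp1 : ∑ i, p i = 1)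
    (hx : ∀ i, ∑ a, ‖x i a‖ ^ 2 = 1) (hy : ∀ i, ∑ b, ‖y i b‖ ^ 2 = 1) :
    ∑ i, (p i : ℂ) • (vecMulVec (x i) (star (x i)) ⊗ₖ vecMulVec (y i) (star (y i))) ∈
      convexHull ℝ (pureProductStates l k) :=
  (convex_convexHull ℝ _).sum_mem (fun i _ ↦ hp i) hp1
    fun i _ ↦ subset_convexHull ℝ _ ⟨x i, y i, hx i, hy i, rfl⟩

end PureProductStates

theorem caratheodory_separable_general (m n : ℕ)
    (ρ : Matrix (Fin m × Fin n) (Fin m × Fin n) ℂ)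
    (I : Type) [Fintype I] (p : I → ℝ)
    (x : I → (Fin m → ℂ)) (y : I → (Fin n → ℂ))
    (hp : ∀ i, 0 ≤ p i) (hp1 : ∑ i, p i = 1)
    (hx : ∀ i, ∑ a, ‖x i a‖ ^ 2 = 1) (hy : ∀ i, ∑ b, ‖y i b‖ ^ 2 = 1)
    (hρ : ρ = ∑ i, (p i : ℂ) •
      (vecMulVec (x i) (star (x i)) ⊗ₖ vecMulVec (y i) (star (y i)))) :
    ∃ N ≤ m ^ 2 * n ^ 2, ∃ (q : Fin N → ℝ) (x' : Fin N → (Fin m → ℂ))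
      (y' : Fin N → (Fin n → ℂ)),
      (∀ j, 0 ≤ q j) ∧ (∑ j, q j = 1) ∧
      (∀ j, ∑ a, ‖x' j a‖ ^ 2 = 1) ∧ (∀ j, ∑ b, ‖y' j b‖ ^ 2 = 1) ∧
      ρ = ∑ j, (q j : ℂ) •
        (vecMulVec (x' j) (star (x' j)) ⊗ₖ vecMulVec (y' j) (star (y' j))) := by
  let reTrace : Matrix (Fin m × Fin n) (Fin m × Fin n) ℂ →ₗ[ℝ] ℝ :=
    Complex.reLm ∘ₗ (traceLinearMap _ ℂ ℂ).restrictScalars ℝ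
  obtain ⟨N, hN, q, σ, hq, hq1, hσ, hρσ⟩ :=
    exists_fin_convexCombination_le_finrank_span reTrace
      (fun σ hσ ↦ by simp [reTrace, trace_of_mem_pureProductStates hσ])
      (hρ ▸ mem_convexHull_pureProductStates hp hp1 hx hy)
  choose x' y' hx' hy' hσ' using hσ
  refine ⟨N, ?_, q, x', y', hq, hq1, hx', hy', ?_⟩
  · simpa [mul_pow] using hN.trans finrank_span_pureProductStates_le
  · simp_rw [Complex.coe_smul, ← hσ', hρσ]

theorem caratheodory_separable (m n : ℕ) (hm : 0 < m) (hn : 0 < n)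
    (ρ : Matrix (Fin m × Fin n) (Fin m × Fin n) ℂ)
    (I : Type) [Fintype I] (p : I → ℝ)
    (x : I → (Fin m → ℂ)) (y : I → (Fin n → ℂ))
    (hp : ∀ i, 0 ≤ p i) (hp1 : ∑ i, p i = 1)
    (hx : ∀ i, ∑ a, ‖x i a‖ ^ 2 = 1) (hy : ∀ i, ∑ b, ‖y i b‖ ^ 2 = 1)
    (hρ : ρ = ∑ i, (p i : ℂ) •
      (vecMulVec (x i) (star (x i)) ⊗ₖ vecMulVec (y i) (star (y i)))) :
    ∃ N ≤ m ^ 2 * n ^ 2, ∃ (q : Fin N → ℝ) (x' : Fin N → (Fin m → ℂ))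
      (y' : Fin N → (Fin n → ℂ)),
      (∀ j, 0 ≤ q j) ∧ (∑ j, q j = 1) ∧
      (∀ j, ∑ a, ‖x' j a‖ ^ 2 = 1) ∧ (∀ j, ∑ b, ‖y' j b‖ ^ 2 = 1) ∧
      ρ = ∑ j, (q j : ℂ) •
        (vecMulVec (x' j) (star (x' j)) ⊗ₖ vecMulVec (y' j) (star (y' j))) :=
  caratheodory_separable_general m n ρ I p x y hp hp1 hx hy hρ
end

section
/- For every real β > 0 and every complex number y, the Hubbard–Stratonovich identity holds: ∫_{s ∈ ℂ} (π*β)⁻¹ * Complex.exp (−(‖s‖² : ℂ)/β + Complex.I * (conj s) * y + Complex.I * s * (conj y)) d(volume s) = Complex.exp (−β * ‖y‖²), where the integral is with respect to the Lebesgue (area) measure on ℂ. -/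
/-! The exponent is `-|s|²/β + 2i⟪y, s⟫_ℝ` for the real inner product on `ℂ ≅ ℝ²`, so the integral
is the Fourier transform of a two-dimensional Gaussian: completing the square gives
`(πβ) · exp(-β|y|²)`, and the prefactor `(πβ)⁻¹` cancels it. -/

open MeasureTheory Complex

namespace Complex

theorem conj_mul_add_mul_conj_eq_two_real_inner (s y : ℂ) :
    starRingEnd ℂ s * y + s * starRingEnd ℂ y = 2 * ((inner ℝ y s : ℝ) : ℂ) := by
  rw [Complex.inner, ← ofReal_ofNat, ← ofReal_mul, ← add_conj, map_mul, conj_conj, add_comm]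

theorem integral_cexp_neg_mul_sq_norm_add_inner {b : ℂ} (hb : 0 < b.re) (c w : ℂ) :
    ∫ s : ℂ, cexp (-b * ‖s‖ ^ 2 + c * ((inner ℝ w s : ℝ) : ℂ)) =
      Real.pi / b * cexp (c ^ 2 * ‖w‖ ^ 2 / (4 * b)) := by
  rw [GaussianFourier.integral_cexp_neg_mul_sq_norm_add hb, finrank_real_complex]
  norm_num

end Complex

theorem hubbard_stratonovich (β : ℝ) (hβ : 0 < β) (y : ℂ) :
    ∫ s : ℂ, ((Real.pi * β : ℝ) : ℂ)⁻¹ *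
        Complex.exp (-(‖s‖ ^ 2 : ℝ) / (β : ℂ) +
          Complex.I * (starRingEnd ℂ s) * y + Complex.I * s * (starRingEnd ℂ y)) =
      Complex.exp (-(β : ℂ) * (‖y‖ ^ 2 : ℝ)) := by
  have hβ' : (β : ℂ) ≠ 0 := ofReal_ne_zero.mpr hβ.ne'
  have hre : 0 < ((β : ℂ)⁻¹).re := by simpa [← ofReal_inv] using hβ
  have exponent (s : ℂ) : -(‖s‖ ^ 2 : ℝ) / (β : ℂ) + I * starRingEnd ℂ s * y +
      I * s * starRingEnd ℂ y = -(β : ℂ)⁻¹ * ‖s‖ ^ 2 + 2 * I * ((inner ℝ y s : ℝ) : ℂ) := by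
    rw [mul_comm 2 I, mul_assoc I 2, ← conj_mul_add_mul_conj_eq_two_real_inner]
    push_cast
    ring
  simp_rw [exponent, integral_const_mul, integral_cexp_neg_mul_sq_norm_add_inner hre]
  have hπ : (Real.pi : ℂ) ≠ 0 := ofReal_ne_zero.mpr Real.pi_ne_zero
  push_cast
  field_simp
  congr 1
  rw [I_sq]
  ring
end

section
/- Let r be a natural number, let h : Matrix (Fin r) (Fin r) ℂ be a positive definite matrix with real entries (h = conj h and h is Hermitian positive definite), let ω : Matrix (Fin r) (Fin r) ℂ be Hermitian and invertible, and let s ∈ ℂ. Let q := h.posDef.sqrt be the positive definite square root of h and set ω' := q⁻¹ * ω * q⁻¹. Then the determinant of the 2r × 2r block matrix M := Matrix.fromBlocks ω (−(2*Complex.I*s) • h) (−(2*Complex.I*(conj s)) • h) (conj ω) equals (det h)² * det((4*(‖s‖² : ℂ)) • (1 : Matrix (Fin r) (Fin r) ℂ) + ω' * conj ω'). -/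
/-!
Writing `h = q²` with `q = √h`, the block matrix factors as `diag(q, q) · N · diag(q, q)` with
`N = [[ω', a], [b, conj ω']]` for the scalars `a = -2is`, `b = -2is̄`; this uses that `q` is
real, because `conj q` is another positive square root of `conj h = h`. The off-diagonal blocks
of `N` are scalar, hence commute with everything, so `det N = det (ω' conj ω' - ab)`, and
`-ab = 4|s|²`.
-/

open Matrix
open scoped ComplexOrder

namespace Matrix

section Blocks

open Polynomial

variable {n R : Type*} [Fintype n] [DecidableEq n] [CommRing R]

theorem det_fromBlocks_mul_det_of_commute (A B C D : Matrix n n R) (hCD : Commute C D) :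
    (fromBlocks A B C D).det * D.det = (A * D - B * C).det * D.det := by
  have hmul : fromBlocks A B C D * fromBlocks D 0 (-C) 1 = fromBlocks (A * D - B * C) B 0 D := by
    simp [fromBlocks_multiply, hCD.eq, sub_eq_add_neg]
  have := congrArg det hmul
  rwa [det_mul, det_fromBlocks_zero₁₂, det_fromBlocks_zero₂₁, det_one, mul_one] at this

theorem det_fromBlocks_of_commute (A B C D : Matrix n n R) (hCD : Commute C D) :
    (fromBlocks A B C D).det = (A * D - B * C).det := by
  -- `det D` may be a zero divisor; `det (D - X)` over `R[X]` is `±` a monic polynomial, so we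
  -- cancel it there and evaluate at `X = 0`.
  let D' : Matrix n n R[X] := -charmatrix D
  have hreg : IsRegular D'.det := by
    rw [det_neg]
    exact ((isUnit_neg_one.pow _).isRegular).mul (charpoly_monic D).isRegular
  have hCD' : Commute (C.map Polynomial.C) D' :=
    ((scalar_commute _ (Commute.all _) _).symm.sub_right (hCD.map Polynomial.C.mapMatrix)).neg_right
  have hpoly := hreg.right.eq_iff.mp <| det_fromBlocks_mul_det_of_commute
    (A.map Polynomial.C) (B.map Polynomial.C) (C.map Polynomial.C) D' hCD'
  have hC (M : Matrix n n R) : (M.map Polynomial.C).map (evalRingHom 0) = M := by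
    ext; simp
  have hD' : D'.map (evalRingHom 0) = D := by
    ext i j; by_cases hij : i = j <;> simp [D', hij]
  have := congrArg (evalRingHom 0) hpoly
  simp only [RingHom.map_det, RingHom.mapMatrix_apply, fromBlocks_map] at this
  rw [Matrix.map_sub _ (map_sub _), Matrix.map_mul, Matrix.map_mul] at this
  simpa only [hC, hD'] using this

theorem det_fromBlocks_smul_one (A D : Matrix n n R) (a b : R) :
    (fromBlocks A (a • 1) (b • 1) D).det = (A * D - (a * b) • 1).det := by
  rw [det_fromBlocks_of_commute _ _ _ _ ((Commute.one_left D).smul_left b), smul_mul_smul_comm,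
    one_mul]

theorem det_fromBlocks_mul_mul_self (P A B C D : Matrix n n R) :
    (fromBlocks (P * A * P) (P * B * P) (P * C * P) (P * D * P)).det =
      P.det ^ 4 * (fromBlocks A B C D).det := by
  have hfac : fromBlocks (P * A * P) (P * B * P) (P * C * P) (P * D * P) =
      fromBlocks P 0 0 P * fromBlocks A B C D * fromBlocks P 0 0 P := by
    simp [fromBlocks_multiply, Matrix.mul_assoc]
  rw [hfac, det_mul, det_mul, det_fromBlocks_zero₂₁]
  ring

theorem nonsing_inv_map_eq_self {f : R →+* R} {A : Matrix n n R} (hA : A.map f = A) :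
    A⁻¹.map f = A⁻¹ := by
  by_cases hdet : IsUnit A.det
  · refine (inv_eq_left_inv ?_).symm
    nth_rw 2 [← hA]
    rw [← Matrix.map_mul, nonsing_inv_mul _ hdet, Matrix.map_one f f.map_zero f.map_one]
  · rw [nonsing_inv_apply_not_isUnit _ hdet, Matrix.map_zero f f.map_zero]

end Blocks

theorem PosSemidef.map_starRingEnd {n 𝕜 : Type*} [RCLike 𝕜] {A : Matrix n n 𝕜}
    (hA : A.PosSemidef) : (A.map (starRingEnd 𝕜)).PosSemidef := by
  have := hA.transpose
  rwa [← hA.isHermitian, conjTranspose_transpose] at this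

section Sqrt

open scoped MatrixOrder

variable {n 𝕜 : Type*} [Fintype n] [DecidableEq n] [RCLike 𝕜]

theorem PosSemidef.cfcSqrt_eq {A : Matrix n n 𝕜} (hA : A.PosSemidef) :
    CFC.sqrt A = hA.1.eigenvectorUnitary.1 * diagonal ((↑) ∘ (√·) ∘ hA.1.eigenvalues) *
      (star hA.1.eigenvectorUnitary : Matrix n n 𝕜) := by
  rw [CFC.sqrt_eq_real_sqrt A hA.nonneg, cfcₙ_eq_cfc (hf0 := Real.sqrt_zero), hA.1.cfc_eq]
  rfl

theorem cfcSqrt_map_starRingEnd {A : Matrix n n 𝕜} (hA : A.PosSemidef) :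
    (CFC.sqrt A).map (starRingEnd 𝕜) = CFC.sqrt (A.map (starRingEnd 𝕜)) := by
  have hsqrt : (CFC.sqrt A).PosSemidef := nonneg_iff_posSemidef.mp (CFC.sqrt_nonneg A)
  rw [eq_comm, CFC.sqrt_eq_iff _ _ hA.map_starRingEnd.nonneg hsqrt.map_starRingEnd.nonneg,
    ← Matrix.map_mul, CFC.sqrt_mul_sqrt_self A hA.nonneg]

end Sqrt

end Matrix

theorem det_block_matrix_hs_general (r : ℕ) (h ω : Matrix (Fin r) (Fin r) ℂ)
    (hh : h.PosDef) (hreal : h.map (starRingEnd ℂ) = h)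
    (s : ℂ) :
    letI q : Matrix (Fin r) (Fin r) ℂ :=
      hh.posSemidef.1.eigenvectorUnitary.1 *
        diagonal ((↑) ∘ (√·) ∘ hh.posSemidef.1.eigenvalues) *
        (star hh.posSemidef.1.eigenvectorUnitary : Matrix (Fin r) (Fin r) ℂ)
    letI ω' : Matrix (Fin r) (Fin r) ℂ := q⁻¹ * ω * q⁻¹
    (Matrix.fromBlocks ω (-(2 * Complex.I * s) • h)
        (-(2 * Complex.I * (starRingEnd ℂ s)) • h) (ω.map (starRingEnd ℂ))).det =
      h.det ^ 2 *
        ((4 * (‖s‖ ^ 2 : ℝ) : ℂ) • (1 : Matrix (Fin r) (Fin r) ℂ) +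
          ω' * ω'.map (starRingEnd ℂ)).det := by
  set q : Matrix (Fin r) (Fin r) ℂ := hh.posSemidef.1.eigenvectorUnitary.1 *
    diagonal ((↑) ∘ (√·) ∘ hh.posSemidef.1.eigenvalues) *
    (star hh.posSemidef.1.eigenvectorUnitary : Matrix (Fin r) (Fin r) ℂ)
  open scoped MatrixOrder in
  have hq : q = CFC.sqrt h := hh.posSemidef.cfcSqrt_eq.symm
  set ω' := q⁻¹ * ω * q⁻¹
  open scoped MatrixOrder in
  have hqq : q * q = h := hq ▸ CFC.sqrt_mul_sqrt_self h hh.posSemidef.nonneg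
  have hq_unit : IsUnit q.det :=
    isUnit_mul_self_iff.mp (by rw [← det_mul, hqq]; exact hh.det_pos.ne'.isUnit)
  have hq_real : q.map (starRingEnd ℂ) = q := by
    rw [hq, cfcSqrt_map_starRingEnd hh.posSemidef, hreal]
  have hcancel (X : Matrix (Fin r) (Fin r) ℂ) : q * (q⁻¹ * X * q⁻¹) * q = X := by
    simp only [Matrix.mul_assoc, nonsing_inv_mul _ hq_unit, Matrix.mul_one]
    rw [← Matrix.mul_assoc, mul_nonsing_inv _ hq_unit, Matrix.one_mul]
  have hsmul (c : ℂ) : q * (c • 1) * q = c • h := by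
    rw [Matrix.mul_smul, Matrix.mul_one, Matrix.smul_mul, hqq]
  have hfactor : Matrix.fromBlocks ω (-(2 * Complex.I * s) • h)
      (-(2 * Complex.I * (starRingEnd ℂ s)) • h) (ω.map (starRingEnd ℂ)) =
      fromBlocks (q * ω' * q) (q * (-(2 * Complex.I * s) • 1) * q)
        (q * (-(2 * Complex.I * (starRingEnd ℂ s)) • 1) * q)
        (q * ω'.map (starRingEnd ℂ) * q) := by
    rw [hsmul, hsmul, Matrix.map_mul, Matrix.map_mul, nonsing_inv_map_eq_self hq_real, hcancel,
      hcancel]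
  have hscalar : -(-(2 * Complex.I * s) * -(2 * Complex.I * starRingEnd ℂ s)) =
      (4 * (‖s‖ ^ 2 : ℝ) : ℂ) := by
    rw [← Complex.normSq_eq_norm_sq, Complex.normSq_eq_conj_mul_self]
    linear_combination (-4 * starRingEnd ℂ s * s) * Complex.I_sq
  rw [hfactor, det_fromBlocks_mul_mul_self, det_fromBlocks_smul_one, sub_eq_add_neg, ← neg_smul,
    hscalar, add_comm, ← hqq, det_mul q q]
  ring

theorem det_block_matrix_hs (r : ℕ) (h ω : Matrix (Fin r) (Fin r) ℂ)
    (hh : h.PosDef) (hreal : h.map (starRingEnd ℂ) = h)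
    (hω : ω.IsHermitian) (hωinv : IsUnit ω.det) (s : ℂ) :
    letI q : Matrix (Fin r) (Fin r) ℂ :=
      hh.posSemidef.1.eigenvectorUnitary.1 *
        diagonal ((↑) ∘ (√·) ∘ hh.posSemidef.1.eigenvalues) *
        (star hh.posSemidef.1.eigenvectorUnitary : Matrix (Fin r) (Fin r) ℂ)
    letI ω' : Matrix (Fin r) (Fin r) ℂ := q⁻¹ * ω * q⁻¹
    (Matrix.fromBlocks ω (-(2 * Complex.I * s) • h)
        (-(2 * Complex.I * (starRingEnd ℂ s)) • h) (ω.map (starRingEnd ℂ))).det =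
      h.det ^ 2 *
        ((4 * (‖s‖ ^ 2 : ℝ) : ℂ) • (1 : Matrix (Fin r) (Fin r) ℂ) +
          ω' * ω'.map (starRingEnd ℂ)).det :=
  det_block_matrix_hs_general r h ω hh hreal s
end
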